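/- arXiv:2511.04863 — 4 statements merged into one kernel-verified Lean document; each statement's English description precedes it below -/
import Mathlib

section
/- Let M and N be matroids on the same finite ground set V, let ν(M, N) denote the maximum cardinality of a set independent in both M and N, and let k ≥ 1 be an integer. If k ≤ ν(M, N) − 1, then the reconfiguration graph RG(M, N; k) is connected. -/
/-- A vertex of the reconfiguration graph `RG(M, N; k)`: a `k`-element set
independent in both matroids. -/
def MIVertex {α : Type*} (M N : Matroid α) (k : ℕ) (S : Finset α) : Prop :=
  S.card = k ∧ M.Indep ↑S ∧ N.Indep ↑S

/-- Adjacency in `RG(M, N; k)`: two common independent `k`-sets `S, T` are adjacent if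
`S ∪ T` is independent in `M` and has cardinality `k + 1`. -/
def MIAdj {α : Type*} [DecidableEq α] (M N : Matroid α) (k : ℕ) (S T : Finset α) : Prop :=
  MIVertex M N k S ∧ MIVertex M N k T ∧
    M.Indep ↑(S ∪ T) ∧ (S ∪ T).card = k + 1

/-- Extend an independent set `B` to an independent set of the same size as `S`,
inside `B ∪ S`, where `S` is independent. -/
lemma mi_extend {α : Type*} [DecidableEq α] (N : Matroid α) (S : Finset α)
    (hS : N.Indep ↑S) :
    ∀ m (B : Finset α), S.card - B.card = m → N.Indep ↑B → B.card ≤ S.card →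
    ∃ J : Finset α, N.Indep ↑J ∧ B ⊆ J ∧ J ⊆ B ∪ S ∧ J.card = S.card := by
  intro m
  induction m with
  | zero =>
    intro B hm hB hle
    exact ⟨B, hB, subset_rfl, Finset.subset_union_left, le_antisymm hle (by omega)⟩
  | succ n ih =>
    intro B hm hB hle
    have hlt : B.card < S.card := by omega
    obtain ⟨e, he, heB⟩ := hB.augment hS (by
      rw [Set.encard_coe_eq_coe_finsetCard, Set.encard_coe_eq_coe_finsetCard]
      exact_mod_cast hlt)
    have heS : e ∈ S := by simpa using he.1
    have heB' : e ∉ B := by simpa using he.2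
    have hcard : (insert e B).card = B.card + 1 := Finset.card_insert_of_notMem heB'
    obtain ⟨J, hJ, hBJ, hJsub, hJcard⟩ := ih (insert e B) (by omega)
      (by rw [Finset.coe_insert]; exact heB) (by omega)
    refine ⟨J, hJ, (Finset.subset_insert e B).trans hBJ, hJsub.trans ?_, hJcard⟩
    rw [Finset.insert_union]
    exact Finset.insert_subset (Finset.mem_union_right _ heS) subset_rfl

/-- The key move: if `S` is a vertex not inside the common independent set `W`
with `k < |W|`, we can move to a vertex strictly closer to `W`. -/
lemma mi_move {α : Type*} [DecidableEq α] (M N : Matroid α) (k : ℕ) (W S : Finset α)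
    (hWM : M.Indep ↑W) (hWN : N.Indep ↑W) (hS : MIVertex M N k S)
    (hlt : k < W.card) (hns : ¬ S ⊆ W) :
    ∃ S', MIAdj M N k S S' ∧ (S' \ W).card < (S \ W).card := by
  obtain ⟨hScard, hSM, hSN⟩ := hS
  obtain ⟨x, hx, hxM⟩ := hSM.augment hWM (by
    rw [Set.encard_coe_eq_coe_finsetCard, Set.encard_coe_eq_coe_finsetCard]
    exact_mod_cast hScard ▸ hlt)
  have hxW : x ∈ W := by simpa using hx.1
  have hxS : x ∉ S := by simpa using hx.2
  rw [← Finset.coe_insert] at hxM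
  -- the base set B
  set B : Finset α := insert x (S ∩ W) with hBdef
  have hBW : B ⊆ W := Finset.insert_subset hxW (Finset.inter_subset_right)
  have hBN : N.Indep ↑B := hWN.subset (by exact_mod_cast hBW)
  have hxSW : x ∉ S ∩ W := fun h => hxS (Finset.mem_of_mem_inter_left h)
  have hSWlt : (S ∩ W).card < S.card :=
    Finset.card_lt_card ⟨Finset.inter_subset_left, fun h => hns fun a ha =>
      Finset.mem_of_mem_inter_right (h ha)⟩
  have hBcard : B.card = (S ∩ W).card + 1 := Finset.card_insert_of_notMem hxSW
  obtain ⟨J, hJN, hBJ, hJsub, hJcard⟩ := mi_extend N S hSN (S.card - B.card) B rfl hBN (by omega)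
  have hJsub' : J ⊆ insert x S := by
    refine hJsub.trans ?_
    rw [hBdef, Finset.insert_union, Finset.union_eq_right.mpr Finset.inter_subset_left]
  have hJM : M.Indep ↑J := hxM.subset (by exact_mod_cast hJsub')
  have hxJ : x ∈ J := hBJ (Finset.mem_insert_self x _)
  have hunion : S ∪ J = insert x S := by
    apply Finset.Subset.antisymm
    · exact Finset.union_subset (Finset.subset_insert x S) hJsub'
    · exact Finset.insert_subset (Finset.mem_union_right _ hxJ) Finset.subset_union_left
  have hucard : (insert x S).card = k + 1 := by
    rw [Finset.card_insert_of_notMem hxS, hScard]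
  refine ⟨J, ⟨⟨hScard, hSM, hSN⟩, ⟨hJcard.trans hScard, hJM, hJN⟩, ?_, ?_⟩, ?_⟩
  · rw [hunion]; exact hxM
  · rw [hunion]; exact hucard
  · have h1 : (J \ W).card + (J ∩ W).card = J.card := Finset.card_sdiff_add_card_inter J W
    have h2 : (S \ W).card + (S ∩ W).card = S.card := Finset.card_sdiff_add_card_inter S W
    have hBJW : B ⊆ J ∩ W := Finset.subset_inter hBJ hBW
    have h3 : B.card ≤ (J ∩ W).card := Finset.card_le_card hBJW
    omega

/-- Any vertex can be walked to a vertex contained in `W`. -/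
lemma mi_reach {α : Type*} [DecidableEq α] (M N : Matroid α) (k : ℕ) (W : Finset α)
    (hWM : M.Indep ↑W) (hWN : N.Indep ↑W) (hlt : k < W.card) :
    ∀ n (S : Finset α), (S \ W).card ≤ n → MIVertex M N k S →
    ∃ S', Relation.ReflTransGen (MIAdj M N k) S S' ∧ MIVertex M N k S' ∧ S' ⊆ W := by
  intro n
  induction n with
  | zero =>
    intro S hn hS
    refine ⟨S, Relation.ReflTransGen.refl, hS, ?_⟩
    rw [← Finset.sdiff_eq_empty_iff_subset]
    exact Finset.card_eq_zero.mp (by omega)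
  | succ n ih =>
    intro S hn hS
    by_cases hsub : S ⊆ W
    · exact ⟨S, Relation.ReflTransGen.refl, hS, hsub⟩
    · obtain ⟨S', hadj, hcard⟩ := mi_move M N k W S hWM hWN hS hlt hsub
      obtain ⟨S'', hgen, hv, hsub'⟩ := ih S' (by omega) hadj.2.1
      exact ⟨S'', Relation.ReflTransGen.head hadj hgen, hv, hsub'⟩

/-- Any two `k`-subsets of a common independent set `W` are connected. -/
lemma mi_stitch {α : Type*} [DecidableEq α] (M N : Matroid α) (k : ℕ) (W : Finset α)
    (hWM : M.Indep ↑W) (hWN : N.Indep ↑W) :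
    ∀ n (A B : Finset α), A ⊆ W → B ⊆ W → A.card = k → B.card = k →
    (A \ B).card ≤ n → Relation.ReflTransGen (MIAdj M N k) A B := by
  intro n
  induction n with
  | zero =>
    intro A B hA hB hAc hBc hn
    have : A = B := Finset.eq_of_subset_of_card_le
      (Finset.sdiff_eq_empty_iff_subset.mp (Finset.card_eq_zero.mp (by omega))) (by omega)
    exact this ▸ Relation.ReflTransGen.refl
  | succ n ih =>
    intro A B hA hB hAc hBc hn
    rcases Nat.eq_zero_or_pos (A \ B).card with h0 | hpos
    · have : A = B := Finset.eq_of_subset_of_card_le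
        (Finset.sdiff_eq_empty_iff_subset.mp (Finset.card_eq_zero.mp h0)) (by omega)
      exact this ▸ Relation.ReflTransGen.refl
    · obtain ⟨a, ha⟩ := Finset.card_pos.mp hpos
      have hBA : (B \ A).Nonempty := by
        rw [← Finset.card_pos]
        have h1 : (A \ B).card + (A ∩ B).card = A.card := Finset.card_sdiff_add_card_inter A B
        have h2 : (B \ A).card + (B ∩ A).card = B.card := Finset.card_sdiff_add_card_inter B A
        rw [Finset.inter_comm] at h2
        omega
      obtain ⟨b, hb⟩ := hBA
      have haA : a ∈ A := (Finset.mem_sdiff.mp ha).1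
      have haB : a ∉ B := (Finset.mem_sdiff.mp ha).2
      have hbB : b ∈ B := (Finset.mem_sdiff.mp hb).1
      have hbA : b ∉ A := (Finset.mem_sdiff.mp hb).2
      set A' : Finset α := insert b (A.erase a) with hA'def
      have hA'W : A' ⊆ W :=
        Finset.insert_subset (hB hbB) ((Finset.erase_subset a A).trans hA)
      have hA'card : A'.card = k := by
        rw [hA'def, Finset.card_insert_of_notMem (fun h => hbA (Finset.mem_of_mem_erase h)),
          Finset.card_erase_of_mem haA, hAc]
        have : 1 ≤ k := by
          rw [← hAc]; exact Finset.card_pos.mpr ⟨a, haA⟩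
        omega
      have hA'v : MIVertex M N k A' :=
        ⟨hA'card, hWM.subset (by exact_mod_cast hA'W), hWN.subset (by exact_mod_cast hA'W)⟩
      have hAv : MIVertex M N k A :=
        ⟨hAc, hWM.subset (by exact_mod_cast hA), hWN.subset (by exact_mod_cast hA)⟩
      have hunion : A ∪ A' = insert b A := by
        rw [hA'def, Finset.union_insert,
          Finset.union_eq_left.mpr (Finset.erase_subset a A)]
      have huW : insert b A ⊆ W := Finset.insert_subset (hB hbB) hA
      have hadj : MIAdj M N k A A' := by
        refine ⟨hAv, hA'v, ?_, ?_⟩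
        · rw [hunion]; exact hWM.subset (by exact_mod_cast huW)
        · rw [hunion, Finset.card_insert_of_notMem hbA, hAc]
      refine Relation.ReflTransGen.head hadj (ih A' B hA'W hB hA'card hBc ?_)
      have hsub : A' \ B ⊆ (A \ B).erase a := by
        intro y hy
        rw [Finset.mem_sdiff] at hy
        rcases Finset.mem_insert.mp hy.1 with rfl | hy'
        · exact absurd hbB hy.2
        · exact Finset.mem_erase.mpr ⟨(Finset.mem_erase.mp hy').1,
            Finset.mem_sdiff.mpr ⟨Finset.mem_of_mem_erase hy', hy.2⟩⟩
      have := Finset.card_le_card hsub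
      rw [Finset.card_erase_of_mem ha] at this
      omega

/-- If `ν(M, N)` is the maximum cardinality of a common independent set of the matroids
`M` and `N`, and `1 ≤ k ≤ ν(M, N) − 1`, then the reconfiguration graph `RG(M, N; k)` on
common independent `k`-sets is connected. -/
theorem stmt_6 {α : Type*} [Fintype α] [DecidableEq α]
    (M N : Matroid α) (hME : M.E = Set.univ) (hNE : N.E = Set.univ)
    (ν k : ℕ)
    (hν : IsGreatest {m | ∃ S : Finset α, M.Indep ↑S ∧ N.Indep ↑S ∧ S.card = m} ν)
    (hk : 1 ≤ k) (hkν : k ≤ ν - 1)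
    (S T : Finset α) (hS : MIVertex M N k S) (hT : MIVertex M N k T) :
    Relation.ReflTransGen (MIAdj M N k) S T := by
  obtain ⟨W, hWM, hWN, hWcard⟩ := hν.1
  have hlt : k < W.card := by omega
  obtain ⟨S', hSgen, hS'v, hS'W⟩ :=
    mi_reach M N k W hWM hWN hlt (S \ W).card S le_rfl hS
  obtain ⟨T', hTgen, hT'v, hT'W⟩ :=
    mi_reach M N k W hWM hWN hlt (T \ W).card T le_rfl hT
  have hmid : Relation.ReflTransGen (MIAdj M N k) S' T' :=
    mi_stitch M N k W hWM hWN (S' \ T').card S' T' hS'W hT'W hS'v.1 hT'v.1 le_rfl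
  have hsymm : Symmetric (MIAdj M N k) := by
    rintro a b ⟨h1, h2, h3, h4⟩
    exact ⟨h2, h1, by rwa [Finset.union_comm], by rwa [Finset.union_comm]⟩
  exact (hSgen.trans hmid).trans (by haveI : Std.Symm (MIAdj M N k) := ⟨hsymm⟩; exact Relation.ReflTransGen.symmetric.symm _ _ hTgen)
end

section
/- Let H be a bipartite graph with bipartition (A, B). If |N(X)| ≥ |X| + 1 for every nonempty subset X ⊆ A, where N(X) denotes the set of vertices of B adjacent to some vertex of X, then the reconfiguration graph RG_Mat(H, A) on matchings of size |A| is connected. -/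
/-- `M` is a matching of the bipartite graph with edge set `E ⊆ α × β`: a set of edges
that pairwise share no endpoint. -/
def BGMatching {α β : Type*} (E M : Finset (α × β)) : Prop :=
  M ⊆ E ∧ ∀ e ∈ M, ∀ f ∈ M, e ≠ f → e.1 ≠ f.1 ∧ e.2 ≠ f.2

/-- Adjacency in the reconfiguration graph `RG_Mat(H, A; k)` of a bipartite graph:
two matchings of size `k` are adjacent if their symmetric difference consists of
exactly two edges with distinct endpoints on the `B`-side. -/
def BGMatAdj {α β : Type*} [DecidableEq α] [DecidableEq β]
    (E : Finset (α × β)) (k : ℕ) (M M' : Finset (α × β)) : Prop :=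
  BGMatching E M ∧ BGMatching E M' ∧ M.card = k ∧ M'.card = k ∧
    ∃ e f : α × β, M \ M' = {e} ∧ M' \ M = {f} ∧ e.2 ≠ f.2

/-!
Encode a matching covering `A` as an injective `f : α → β` with `(a, f a) ∈ E`; a move then
changes one value of `f` to a vertex outside its range. Induct on the set `D` where `f` and `g`
disagree. If some `g w` is free for `f`, moving `w` onto it shrinks `D`. Otherwise, the surplus
condition applied to `D` together with everything reachable from it by alternating paths yields a
free vertex joined to `D` by an alternating path. Shifting `f` and `g` simultaneously along that
path leaves `D` unchanged and brings the free vertex next to `D`, and then two moves shrink `D`.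
-/

open Finset Function

theorem Function.Injective.apply_notMem_range_update {α β : Type*} [DecidableEq α]
    {f : α → β} (hf : Injective f) {a : α} {b : β} (h : f a ≠ b) :
    f a ∉ Set.range (update f a b) := by
  rintro ⟨x, hx⟩
  by_cases hxa : x = a
  · subst hxa
    rw [update_self] at hx
    exact h hx.symm
  · rw [update_of_ne hxa] at hx
    exact hxa (hf hx)

namespace BGMatching

variable {α β : Type*} {E : Finset (α × β)}

def IsMatchingFun (E : Finset (α × β)) (f : α → β) : Prop :=
  Injective f ∧ ∀ a, (a, f a) ∈ E

theorem IsMatchingFun.update [DecidableEq α] {f : α → β} (hf : IsMatchingFun E f) {a : α}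
    {b : β} (hb : b ∉ Set.range f) (hab : (a, b) ∈ E) : IsMatchingFun E (update f a b) := by
  refine ⟨fun x y hxy => ?_, fun x => ?_⟩
  · have hne : ∀ z, z ≠ a → f z ≠ b := fun z _ h => hb ⟨z, h⟩
    by_cases hx : x = a <;> by_cases hy : y = a <;>
      simp_all [update_of_ne, hf.1.eq_iff]
  · by_cases hx : x = a
    · subst hx; simpa using hab
    · simpa [hx] using hf.2 x

def HasSurplus [DecidableEq α] [DecidableEq β] (E : Finset (α × β)) : Prop :=
  ∀ X : Finset α, X.Nonempty →
    X.card + 1 ≤ ((E.filter fun e => e.1 ∈ X).image Prod.snd).card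

instance [DecidableEq α] [DecidableEq β] (E : Finset (α × β)) (k : ℕ) :
    Std.Symm (BGMatAdj E k) where
  symm _ _ := fun ⟨hM, hM', hc, hc', e, f, h, h', hef⟩ =>
    ⟨hM', hM, hc', hc, f, e, h', h, hef.symm⟩

section matchingOf

variable [Fintype α]

def matchingOf (f : α → β) : Finset (α × β) :=
  univ.map ⟨fun a => (a, f a), fun _ _ h => (Prod.mk.inj h).1⟩

@[simp]
theorem mk_mem_matchingOf {f : α → β} {a : α} {b : β} :
    (a, b) ∈ matchingOf f ↔ f a = b := by
  simp only [matchingOf, mem_map, mem_univ, true_and]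
  constructor
  · rintro ⟨x, hx⟩
    obtain ⟨rfl, rfl⟩ := Prod.mk.inj hx
    rfl
  · rintro rfl
    exact ⟨a, rfl⟩

theorem card_matchingOf (f : α → β) : (matchingOf f).card = Fintype.card α :=
  card_map _

theorem IsMatchingFun.bgMatching {f : α → β} (hf : IsMatchingFun E f) :
    BGMatching E (matchingOf f) := by
  refine ⟨fun ⟨a, b⟩ h => ?_, fun ⟨a, b⟩ h ⟨a', b'⟩ h' hne => ?_⟩
  · rw [mk_mem_matchingOf] at h
    exact h ▸ hf.2 a
  · rw [mk_mem_matchingOf] at h h'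
    subst h h'
    exact ⟨fun h => hne (by simp_all), fun h => hne (by rw [hf.1 h])⟩

theorem exists_eq_matchingOf [DecidableEq α] {M : Finset (α × β)} (hM : BGMatching E M)
    (hcard : M.card = Fintype.card α) : ∃ f, IsMatchingFun E f ∧ M = matchingOf f := by
  have hfst : M.image Prod.fst = univ := by
    refine eq_univ_of_card _ ?_
    rw [card_image_of_injOn, hcard]
    intro e he e' he' h
    by_contra hne
    exact (hM.2 e he e' he' hne).1 h
  have hcover : ∀ a, ∃ b, (a, b) ∈ M := by
    intro a
    obtain ⟨⟨a', b⟩, he, rfl⟩ := mem_image.1 (hfst ▸ mem_univ a)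
    exact ⟨b, he⟩
  choose f hf using hcover
  refine ⟨f, ⟨fun a a' h => ?_, fun a => hM.1 (hf a)⟩, ?_⟩
  · by_contra hne
    exact (hM.2 _ (hf a) _ (hf a') (by simp [hne])).2 h
  · refine (eq_of_subset_of_card_le (fun ⟨a, b⟩ h => ?_) (by rw [card_matchingOf, hcard])).symm
    rw [mk_mem_matchingOf] at h
    exact h ▸ hf a

end matchingOf

section disagree

variable [Fintype α] [DecidableEq β]

def disagree (f g : α → β) : Finset α := univ.filter fun a => f a ≠ g a

variable {f g : α → β}

@[simp]
theorem mem_disagree {a : α} : a ∈ disagree f g ↔ f a ≠ g a := by simp [disagree]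

theorem disagree_eq_empty_iff : disagree f g = ∅ ↔ f = g := by
  simp [eq_empty_iff_forall_notMem, funext_iff]

theorem disagree_comm : disagree f g = disagree g f := by
  ext a
  simp [ne_comm]

variable [DecidableEq α] {a : α}

theorem disagree_update_self_left : disagree (update f a (g a)) g = (disagree f g).erase a := by
  ext x
  by_cases hx : x = a <;> simp [hx]

theorem disagree_update_left_of_ne {y : β} (hy : y ≠ g a) :
    disagree (update f a y) g = insert a (disagree f g) := by
  ext x
  by_cases hx : x = a <;> simp [hx, hy]

theorem disagree_update_update {y : β} :
    disagree (update f a y) (update g a y) = (disagree f g).erase a := by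
  ext x
  by_cases hx : x = a <;> simp [hx]

end disagree

/-- `AltPath E f S b [c₁, …, cₖ]` encodes the path `b, c₁, f c₁, c₂, …, cₖ, f cₖ, a` with
`a ∈ S` and all `cᵢ ∉ S`, alternating between edges of `E` and edges of the matching `f`. -/
inductive AltPath (E : Finset (α × β)) (f : α → β) (S : Finset α) : β → List α → Prop
  | adj {a : α} {b : β} : a ∈ S → (a, b) ∈ E → AltPath E f S b []
  | cons {b : β} {c : α} {l : List α} :
      c ∉ S → (c, b) ∈ E → AltPath E f S (f c) l → AltPath E f S b (c :: l)

section AltPath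

variable {f g : α → β} {S : Finset α} {b : β} {l : List α}

theorem AltPath.congr (h : AltPath E f S b l) (hfg : ∀ x ∈ l, f x = g x) :
    AltPath E g S b l := by
  induction h with
  | adj ha hab => exact .adj ha hab
  | cons hc hcb _ ih =>
    refine .cons hc hcb ?_
    rw [← hfg _ List.mem_cons_self]
    exact ih fun x hx => hfg x (List.mem_cons_of_mem _ hx)

theorem AltPath.exists_shorter {c : α} (h : AltPath E f S b l) (hc : c ∈ l) :
    ∃ v, AltPath E f S (f c) v ∧ v.length < l.length := by
  induction h with
  | adj => simp at hc
  | @cons b c' l _ _ hl ih =>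
    rcases List.mem_cons.1 hc with rfl | hc
    · exact ⟨l, hl, by simp⟩
    · obtain ⟨v, hv, hlen⟩ := ih hc
      exact ⟨v, hv, by simp; omega⟩

/-- Hall's argument: the set of vertices that lie in `S` or whose partner starts an alternating
path to `S` has more neighbours than partners, so one of its neighbours is free. -/
theorem exists_altPath [Fintype α] [DecidableEq α] [DecidableEq β] (hE : HasSurplus E)
    (f : α → β) (hS : S.Nonempty) : ∃ b ∉ Set.range f, ∃ l, AltPath E f S b l := by
  classical
  by_contra! h
  set Z := univ.filter fun c => c ∈ S ∨ ∃ l, AltPath E f S (f c) l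
  have hSZ : S ⊆ Z := fun a ha => mem_filter.2 ⟨mem_univ a, .inl ha⟩
  have hN : (E.filter fun e => e.1 ∈ Z).image Prod.snd ⊆ Z.image f := by
    intro y hy
    obtain ⟨⟨x, y⟩, hxy, rfl⟩ := mem_image.1 hy
    obtain ⟨hxy, hx⟩ := mem_filter.1 hxy
    have hpath : ∃ l, AltPath E f S y l := by
      by_cases hxS : x ∈ S
      · exact ⟨[], .adj hxS hxy⟩
      · obtain ⟨l, hl⟩ := (mem_filter.1 hx).2.resolve_left hxS
        exact ⟨x :: l, .cons hxS hxy hl⟩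
    obtain ⟨l, hl⟩ := hpath
    by_cases hy : y ∈ Set.range f
    · obtain ⟨c, rfl⟩ := hy
      exact mem_image_of_mem f (mem_filter.2 ⟨mem_univ c, .inr ⟨l, hl⟩⟩)
    · exact absurd hl (h y hy l)
  have hsurplus := hE Z (hS.mono hSZ)
  have hdeficit := (card_le_card hN).trans card_image_le
  omega

end AltPath

section Reachable

variable [Fintype α] [DecidableEq α] [DecidableEq β]

def Reachable (E : Finset (α × β)) (f g : α → β) : Prop :=
  Relation.ReflTransGen (BGMatAdj E (Fintype.card α)) (matchingOf f) (matchingOf g)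

theorem Reachable.refl (f : α → β) : Reachable E f f := Relation.ReflTransGen.refl

theorem Reachable.trans {f g h : α → β} (hfg : Reachable E f g) (hgh : Reachable E g h) :
    Reachable E f h :=
  Relation.ReflTransGen.trans hfg hgh

theorem Reachable.symm {f g : α → β} (h : Reachable E f g) : Reachable E g f :=
  Std.Symm.symm (r := Relation.ReflTransGen (BGMatAdj E (Fintype.card α))) _ _ h

theorem matchingOf_sdiff_matchingOf_update {f : α → β} {a : α} {b : β} (h : f a ≠ b) :
    matchingOf f \ matchingOf (update f a b) = {(a, f a)} := by
  ext ⟨x, y⟩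
  by_cases hx : x = a
  · subst hx
    simp only [mem_sdiff, mk_mem_matchingOf, update_self, mem_singleton, Prod.mk.injEq, true_and]
    exact ⟨fun ⟨hy, _⟩ => hy.symm, fun hy => ⟨hy.symm, hy ▸ h.symm⟩⟩
  · simp [hx]

theorem reachable_update {f : α → β} (hf : IsMatchingFun E f) {a : α} {b : β}
    (hb : b ∉ Set.range f) (hab : (a, b) ∈ E) : Reachable E f (update f a b) := by
  have hne : f a ≠ b := fun h => hb ⟨a, h⟩
  refine .single ⟨hf.bgMatching, (hf.update hb hab).bgMatching, card_matchingOf f,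
    card_matchingOf _, (a, f a), (a, b), matchingOf_sdiff_matchingOf_update hne, ?_, hne⟩
  simpa using matchingOf_sdiff_matchingOf_update (f := update f a b) (a := a) (b := f a)
    (by simpa using hne.symm)

theorem reachable_of_apply_notMem_range {f g : α → β} (hf : IsMatchingFun E f)
    (hg : IsMatchingFun E g)
    (ih : ∀ f' g', IsMatchingFun E f' → IsMatchingFun E g' →
      (disagree f' g').card < (disagree f g).card → Reachable E f' g')
    {w : α} (hw : g w ∉ Set.range f) : Reachable E f g := by
  have hwD : w ∈ disagree f g := mem_disagree.2 fun h => hw ⟨w, h⟩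
  refine (reachable_update hf hw (hg.2 w)).trans (ih _ _ (hf.update hw (hg.2 w)) hg ?_)
  rw [disagree_update_self_left]
  exact card_erase_lt_of_mem hwD

/-- Shifting `f` and `g` simultaneously along the path keeps their disagreement set `D` and moves
the free vertex down to a neighbour of `D`, where two moves fix one disagreement. -/
theorem reachable_of_altPath {D : Finset α}
    (ih : ∀ f' g', IsMatchingFun E f' → IsMatchingFun E g' →
      (disagree f' g').card < D.card → Reachable E f' g')
    {f g : α → β} (hf : IsMatchingFun E f) (hg : IsMatchingFun E g) (hD : disagree f g = D)
    {b : β} (hb : b ∉ Set.range f) {l : List α} (hl : AltPath E f D b l) : Reachable E f g := by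
  by_cases hbg : b ∈ Set.range g
  · obtain ⟨w, rfl⟩ := hbg
    exact reachable_of_apply_notMem_range hf hg (hD ▸ ih) hb
  have hfb : ∀ x, f x ≠ b := fun x h => hb ⟨x, h⟩
  match l, hl with
  | [], .adj (a := a) ha hab =>
    by_cases hfa : f a ∈ Set.range g
    · obtain ⟨w, hw⟩ := hfa
      have hD₁ : disagree (update f a b) g = D := by
        rw [disagree_update_left_of_ne fun h => hbg ⟨a, h.symm⟩, hD, insert_eq_of_mem ha]
      refine (reachable_update hf hb hab).trans
        (reachable_of_apply_notMem_range (hf.update hb hab) hg (hD₁ ▸ ih) (w := w) ?_)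
      rw [hw]
      exact hf.1.apply_notMem_range_update (hfb a)
    · refine (reachable_of_apply_notMem_range hg hf ?_ hfa).symm
      rw [disagree_comm, hD]
      exact fun f' g' hf' hg' h => (ih g' f' hg' hf' (disagree_comm (f := f') ▸ h)).symm
  | c :: l, .cons hcD hcb hl =>
    by_cases hcl : c ∈ l
    · obtain ⟨v, hv, hlen⟩ := hl.exists_shorter hcl
      exact reachable_of_altPath ih hf hg hD hb (.cons hcD hcb hv)
    refine ((reachable_update hf hb hcb).trans (reachable_of_altPath ih (hf.update hb hcb)
      (hg.update hbg hcb) ?_ (hf.1.apply_notMem_range_update (hfb c)) (hl.congr ?_))).trans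
      (reachable_update hg hbg hcb).symm
    · rw [disagree_update_update, hD, erase_eq_of_notMem hcD]
    · intro x hx
      rw [update_of_ne (by rintro rfl; exact hcl hx)]
termination_by l.length

theorem reachable_of_hasSurplus (hE : HasSurplus E) {f g : α → β} (hf : IsMatchingFun E f)
    (hg : IsMatchingFun E g) : Reachable E f g := by
  obtain hD | hD := (disagree f g).eq_empty_or_nonempty
  · rw [disagree_eq_empty_iff.1 hD]
    exact .refl g
  obtain ⟨b, hb, l, hl⟩ := exists_altPath hE f hD
  exact reachable_of_altPath (fun f' g' hf' hg' _ => reachable_of_hasSurplus hE hf' hg')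
    hf hg rfl hb hl
termination_by (disagree f g).card

end Reachable

end BGMatching

theorem stmt_12_general {α β : Type*} [Fintype α] [DecidableEq α] [DecidableEq β]
    (E : Finset (α × β))
    (hHall : ∀ X : Finset α, X.Nonempty →
      X.card + 1 ≤ ((E.filter fun e => e.1 ∈ X).image Prod.snd).card)
    (M M' : Finset (α × β))
    (hM : BGMatching E M) (hMcard : M.card = Fintype.card α)
    (hM' : BGMatching E M') (hM'card : M'.card = Fintype.card α) :
    Relation.ReflTransGen (BGMatAdj E (Fintype.card α)) M M' := by
  obtain ⟨f, hf, rfl⟩ := hM.exists_eq_matchingOf hMcard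
  obtain ⟨g, hg, rfl⟩ := hM'.exists_eq_matchingOf hM'card
  exact BGMatching.reachable_of_hasSurplus hHall hf hg

/-- Reconfiguration version of Hall's theorem: if `|N(X)| ≥ |X| + 1` for every nonempty
`X ⊆ A`, then the reconfiguration graph on matchings covering `A` is connected. -/
theorem stmt_12 {α β : Type*} [Fintype α] [DecidableEq α] [Fintype β] [DecidableEq β]
    (E : Finset (α × β))
    (hHall : ∀ X : Finset α, X.Nonempty →
      X.card + 1 ≤ ((E.filter fun e => e.1 ∈ X).image Prod.snd).card)
    (M M' : Finset (α × β))
    (hM : BGMatching E M) (hMcard : M.card = Fintype.card α)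
    (hM' : BGMatching E M') (hM'card : M'.card = Fintype.card α) :
    Relation.ReflTransGen (BGMatAdj E (Fintype.card α)) M M' :=
  stmt_12_general E hHall M M' hM hMcard hM' hM'card
end

section
/- Let H be a bipartite graph with bipartition (A, B), let ν(H) denote its matching number, and let k ≥ 1 be an integer. If k ≤ ν(H) − 1, then the reconfiguration graph RG_Mat(H, A; k − 1) on matchings of size k − 1 is connected. -/
section Aux

variable {α β : Type*} [DecidableEq α] [DecidableEq β]

lemma bg_subset {E M N : Finset (α × β)} (h : BGMatching E M) (hs : N ⊆ M) :
    BGMatching E N :=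
  ⟨hs.trans h.1, fun e he f hf => h.2 e (hs he) f (hs hf)⟩

lemma bg_adj_symm {E : Finset (α × β)} {s : ℕ} : Symmetric (BGMatAdj E s) := by
  rintro M N ⟨h1, h2, h3, h4, e, f, he, hf, hef⟩
  exact ⟨h2, h1, h4, h3, f, e, hf, he, hef.symm⟩

lemma rtg_symm {X : Type*} {r : X → X → Prop} (h : Symmetric r) {a b : X}
    (hab : Relation.ReflTransGen r a b) : Relation.ReflTransGen r b a := by
  induction hab with
  | refl => exact Relation.ReflTransGen.refl
  | tail _ h2 ih => exact Relation.ReflTransGen.head (h h2) ih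

lemma bg_exchange {E M : Finset (α × β)} {s : ℕ} (hM : BGMatching E M) (hMc : M.card = s)
    (e f : α × β) (heM : e ∈ M) (hfE : f ∈ E) (hfM : f ∉ M)
    (hfst : ∀ m ∈ M, m ≠ e → m.1 ≠ f.1)
    (hsnd : ∀ m ∈ M, m ≠ e → m.2 ≠ f.2)
    (hef : e.2 ≠ f.2) :
    BGMatAdj E s M (insert f (M.erase e)) := by
  have hefne : e ≠ f := fun h => hfM (h ▸ heM)
  have hNmatch : BGMatching E (insert f (M.erase e)) := by
    constructor
    · intro x hx
      rcases Finset.mem_insert.1 hx with rfl | hx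
      · exact hfE
      · exact hM.1 (Finset.mem_of_mem_erase hx)
    · intro x hx y hy hxy
      simp only [Finset.mem_insert, Finset.mem_erase] at hx hy
      rcases hx with rfl | ⟨hxe, hxM⟩
      · rcases hy with rfl | ⟨hye, hyM⟩
        · exact absurd rfl hxy
        · exact ⟨(hfst y hyM hye).symm, (hsnd y hyM hye).symm⟩
      · rcases hy with rfl | ⟨hye, hyM⟩
        · exact ⟨hfst x hxM hxe, hsnd x hxM hxe⟩
        · exact hM.2 x hxM y hyM hxy
  have hNcard : (insert f (M.erase e)).card = s := by
    have hfe : f ∉ M.erase e := fun h => hfM (Finset.mem_of_mem_erase h)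
    rw [Finset.card_insert_of_notMem hfe, Finset.card_erase_add_one heM, hMc]
  have h1 : M \ insert f (M.erase e) = {e} := by
    ext x
    simp only [Finset.mem_sdiff, Finset.mem_insert, Finset.mem_erase, Finset.mem_singleton]
    constructor
    · rintro ⟨hxM, hx⟩
      by_contra hne
      exact hx (Or.inr ⟨hne, hxM⟩)
    · rintro rfl
      refine ⟨heM, ?_⟩
      rintro (h | ⟨h, _⟩)
      · exact hefne h
      · exact h rfl
  have h2 : insert f (M.erase e) \ M = {f} := by
    ext x
    simp only [Finset.mem_sdiff, Finset.mem_insert, Finset.mem_erase, Finset.mem_singleton]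
    constructor
    · rintro ⟨h | ⟨_, hx⟩, hxM⟩
      · exact h
      · exact absurd hx hxM
    · rintro rfl
      exact ⟨Or.inl rfl, hfM⟩
  exact ⟨hM, hNmatch, hMc, hNcard, e, f, h1, h2, hef⟩

lemma bg_step {E Mstar M : Finset (α × β)} {s : ℕ}
    (hstar : BGMatching E Mstar) (hM : BGMatching E M) (hMc : M.card = s)
    (hlt : M.card < Mstar.card) (hne : (M \ Mstar).Nonempty) :
    ∃ N, BGMatAdj E s M N ∧ (N \ Mstar).card < (M \ Mstar).card := by
  have hf : ∃ f ∈ Mstar \ M, ∀ m ∈ M, m.2 ≠ f.2 := by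
    by_contra hcon
    push_neg at hcon
    have hsub : (Mstar \ M).image Prod.snd ⊆ (M \ Mstar).image Prod.snd := by
      intro b hb
      obtain ⟨f, hfm, rfl⟩ := Finset.mem_image.1 hb
      obtain ⟨m, hm, hm2⟩ := hcon f hfm
      have hfMs := (Finset.mem_sdiff.1 hfm).1
      have hfM := (Finset.mem_sdiff.1 hfm).2
      have hmMs : m ∉ Mstar := by
        intro hmMs
        rcases eq_or_ne m f with rfl | hne'
        · exact hfM hm
        · exact (hstar.2 m hmMs f hfMs hne').2 hm2
      exact Finset.mem_image.2 ⟨m, Finset.mem_sdiff.2 ⟨hm, hmMs⟩, hm2⟩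
    have hinj : Set.InjOn Prod.snd ((Mstar \ M : Finset (α × β)) : Set (α × β)) := by
      intro x hx y hy hxy
      by_contra hne'
      exact (hstar.2 x (Finset.mem_sdiff.1 hx).1 y (Finset.mem_sdiff.1 hy).1 hne').2 hxy
    have h1 : (Mstar \ M).card ≤ (M \ Mstar).card :=
      le_trans (le_of_eq (Finset.card_image_of_injOn hinj).symm)
        (le_trans (Finset.card_le_card hsub) Finset.card_image_le)
    have h2 := Finset.card_sdiff_add_card_inter M Mstar
    have h3 := Finset.card_sdiff_add_card_inter Mstar M
    rw [Finset.inter_comm] at h3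
    omega
  obtain ⟨f, hfmem, hfsnd⟩ := hf
  have hfMs := (Finset.mem_sdiff.1 hfmem).1
  have hfM := (Finset.mem_sdiff.1 hfmem).2
  have key : ∃ e, e ∈ M ∧ e ∉ Mstar ∧ ∀ m ∈ M, m ≠ e → m.1 ≠ f.1 := by
    by_cases ha : ∃ e ∈ M, e.1 = f.1
    · obtain ⟨e, heM, he1⟩ := ha
      have heMs : e ∉ Mstar := by
        intro heMs
        rcases eq_or_ne e f with rfl | hne'
        · exact hfM heM
        · exact (hstar.2 e heMs f hfMs hne').1 he1
      refine ⟨e, heM, heMs, fun m hm hmne h => ?_⟩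
      exact (hM.2 m hm e heM hmne).1 (h.trans he1.symm)
    · push_neg at ha
      obtain ⟨e, he⟩ := hne
      exact ⟨e, (Finset.mem_sdiff.1 he).1, (Finset.mem_sdiff.1 he).2,
        fun m hm _ => ha m hm⟩
  obtain ⟨e, heM, heMs, hfst⟩ := key
  have hadj := bg_exchange hM hMc e f heM (hstar.1 hfMs) hfM hfst
    (fun m hm _ => hfsnd m hm) (hfsnd e heM)
  refine ⟨_, hadj, ?_⟩
  have hEq : insert f (M.erase e) \ Mstar = (M \ Mstar).erase e := by
    ext x
    simp only [Finset.mem_sdiff, Finset.mem_insert, Finset.mem_erase]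
    constructor
    · rintro ⟨rfl | h1, h2⟩
      · exact absurd hfMs h2
      · exact ⟨h1.1, h1.2, h2⟩
    · rintro ⟨h1, h2, h3⟩
      exact ⟨Or.inr ⟨h1, h2⟩, h3⟩
  rw [hEq]
  exact Finset.card_erase_lt_of_mem (Finset.mem_sdiff.2 ⟨heM, heMs⟩)

lemma bg_to_max {E Mstar : Finset (α × β)} {s : ℕ}
    (hstar : BGMatching E Mstar) (hs : s < Mstar.card) :
    ∀ n (M : Finset (α × β)), (M \ Mstar).card = n → BGMatching E M → M.card = s →
      ∃ T, T ⊆ Mstar ∧ T.card = s ∧ Relation.ReflTransGen (BGMatAdj E s) M T := by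
  intro n
  induction n using Nat.strong_induction_on with
  | _ n ih =>
    intro M hn hM hMc
    rcases Nat.eq_zero_or_pos n with rfl | hpos
    · have hzero : M \ Mstar = ∅ := Finset.card_eq_zero.1 hn
      exact ⟨M, Finset.sdiff_eq_empty_iff_subset.1 hzero, hMc, Relation.ReflTransGen.refl⟩
    · have hne : (M \ Mstar).Nonempty := Finset.card_pos.1 (by omega)
      obtain ⟨N, hadj, hlt⟩ := bg_step hstar hM hMc (by rw [hMc]; exact hs) hne
      have hN := hadj.2.1
      have hNc := hadj.2.2.2.1
      obtain ⟨T, hT1, hT2, hT3⟩ := ih _ (by omega) N rfl hN hNc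
      exact ⟨T, hT1, hT2, Relation.ReflTransGen.head hadj hT3⟩

lemma bg_swap {E Mstar : Finset (α × β)} {s : ℕ} (hstar : BGMatching E Mstar) :
    ∀ n (S T : Finset (α × β)), (S \ T).card = n → S ⊆ Mstar → T ⊆ Mstar →
      S.card = s → T.card = s →
      Relation.ReflTransGen (BGMatAdj E s) S T := by
  intro n
  induction n using Nat.strong_induction_on with
  | _ n ih =>
    intro S T hn hS hT hSc hTc
    rcases Nat.eq_zero_or_pos n with rfl | hpos
    · have hsub : S ⊆ T := Finset.sdiff_eq_empty_iff_subset.1 (Finset.card_eq_zero.1 hn)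
      rw [Finset.eq_of_subset_of_card_le hsub (by omega)]
    · obtain ⟨e, he⟩ : (S \ T).Nonempty := Finset.card_pos.1 (by omega)
      have he' := Finset.mem_sdiff.1 he
      have hTS : (T \ S).Nonempty := by
        rw [← Finset.card_pos]
        have h2 := Finset.card_sdiff_add_card_inter S T
        have h3 := Finset.card_sdiff_add_card_inter T S
        rw [Finset.inter_comm] at h3
        omega
      obtain ⟨f, hfm⟩ := hTS
      have hf' := Finset.mem_sdiff.1 hfm
      have hfne : ∀ m ∈ S, m ≠ f := fun m hm hh => hf'.2 (hh ▸ hm)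
      have hef : e ≠ f := hfne e he'.1
      have hSm : BGMatching E S := bg_subset hstar hS
      have hadj := bg_exchange hSm hSc e f he'.1 (hstar.1 (hT hf'.1)) hf'.2
        (fun m hm _ => (hstar.2 m (hS hm) f (hT hf'.1) (hfne m hm)).1)
        (fun m hm _ => (hstar.2 m (hS hm) f (hT hf'.1) (hfne m hm)).2)
        ((hstar.2 e (hS he'.1) f (hT hf'.1) hef).2)
      have hNc := hadj.2.2.2.1
      have hNsub : insert f (S.erase e) ⊆ Mstar := by
        intro x hx
        rcases Finset.mem_insert.1 hx with rfl | hx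
        · exact hT hf'.1
        · exact hS (Finset.mem_of_mem_erase hx)
      have hEq : insert f (S.erase e) \ T = (S \ T).erase e := by
        ext x
        simp only [Finset.mem_sdiff, Finset.mem_insert, Finset.mem_erase]
        constructor
        · rintro ⟨rfl | h1, h2⟩
          · exact absurd hf'.1 h2
          · exact ⟨h1.1, h1.2, h2⟩
        · rintro ⟨h1, h2, h3⟩
          exact ⟨Or.inr ⟨h1, h2⟩, h3⟩
      have hcard : (insert f (S.erase e) \ T).card < n := by
        rw [hEq, ← hn]
        exact Finset.card_erase_lt_of_mem he
      exact Relation.ReflTransGen.head hadj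
        (ih _ hcard (insert f (S.erase e)) T rfl hNsub hT hNc hTc)

end Aux

/-- If `ν(H)` is the matching number of the bipartite graph `H` and `1 ≤ k ≤ ν(H) − 1`,
then the reconfiguration graph on matchings of size `k − 1` is connected. -/
theorem stmt_13 {α β : Type*} [Fintype α] [DecidableEq α] [Fintype β] [DecidableEq β]
    (E : Finset (α × β)) (ν k : ℕ)
    (hν : IsGreatest {m | ∃ M : Finset (α × β), BGMatching E M ∧ M.card = m} ν)
    (hk : 1 ≤ k) (hkν : k ≤ ν - 1)
    (M M' : Finset (α × β))
    (hM : BGMatching E M) (hMcard : M.card = k - 1)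
    (hM' : BGMatching E M') (hM'card : M'.card = k - 1) :
    Relation.ReflTransGen (BGMatAdj E (k - 1)) M M' := by
  obtain ⟨Mstar, hstar, hstarc⟩ := hν.1
  have hs : k - 1 < Mstar.card := by rw [hstarc]; omega
  obtain ⟨T, hT1, hT2, hT3⟩ := bg_to_max hstar hs _ M rfl hM hMcard
  obtain ⟨T', hT1', hT2', hT3'⟩ := bg_to_max hstar hs _ M' rfl hM' hM'card
  have hmid := bg_swap hstar _ T T' rfl hT1 hT1' hT2 hT2'
  exact (hT3.trans hmid).trans (rtg_symm bg_adj_symm hT3')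
end

section
/- For every integer r ≥ 3 there exists a bipartite r-uniform hypergraph H with bipartition (A, B) such that the reconfiguration graph RG_Mat(H, A; ν(H) − 1) is disconnected, i.e., it contains two matchings of size ν(H) − 1 that are not linked by any finite sequence of matchings of size ν(H) − 1 in which consecutive ones are adjacent. (One such example is the r-graph on the 2r vertices x_1, …, x_r, y_1, …, y_r with the four edges {x_1, x_2, x_3, …, x_r}, {x_1, x_2, y_3, …, y_r}, {y_1, y_2, x_3, …, x_r}, {y_1, y_2, y_3, …, y_r} and A = {x_1, y_1}.) -/
/-- `M` is a matching of the hypergraph with edge set `E`: a set of pairwise disjoint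
edges. -/
def HypMatching {V : Type*} [DecidableEq V] (E : Finset (Finset V))
    (M : Finset (Finset V)) : Prop :=
  M ⊆ E ∧ ∀ e ∈ M, ∀ f ∈ M, e ≠ f → Disjoint e f

/-- Adjacency in the reconfiguration graph `RG_Mat(H, A; k)` of a bipartite hypergraph
with bipartition `(A, B)`: two matchings of size `k` are adjacent if their symmetric
difference consists of exactly two edges whose parts on the `B`-side are disjoint. -/
def BipMatAdj {V : Type*} [DecidableEq V] (E : Finset (Finset V)) (B : Finset V)
    (k : ℕ) (M M' : Finset (Finset V)) : Prop :=
  HypMatching E M ∧ HypMatching E M' ∧ M.card = k ∧ M'.card = k ∧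
    ∃ e f : Finset V, M \ M' = {e} ∧ M' \ M = {f} ∧ Disjoint (e ∩ B) (f ∩ B)

/-- For every `r ≥ 3` there is a bipartite `r`-uniform hypergraph `H` with bipartition
`(A, B)` whose reconfiguration graph on matchings of size `ν(H) − 1` is disconnected:
it has two matchings of size `ν(H) − 1` not linked by any reconfiguration sequence. -/
theorem stmt_19 (r : ℕ) (hr : 3 ≤ r) :
    ∃ (m : ℕ) (A B : Finset (Fin m)) (E : Finset (Finset (Fin m))) (ν : ℕ),
      Disjoint A B ∧ A ∪ B = Finset.univ ∧
      (∀ e ∈ E, e.card = r) ∧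
      (∀ e ∈ E, (e ∩ A).card = 1) ∧
      IsGreatest {k | ∃ M : Finset (Finset (Fin m)), HypMatching E M ∧ M.card = k} ν ∧
      ∃ M M' : Finset (Finset (Fin m)),
        HypMatching E M ∧ M.card = ν - 1 ∧
        HypMatching E M' ∧ M'.card = ν - 1 ∧
        ¬ Relation.ReflTransGen (BipMatAdj E B (ν - 1)) M M' := by
  classical
  set m := 2 * r with hm
  have h0 : (0:ℕ) < m := by omega
  have h1m : (1:ℕ) < m := by omega
  have h2m : (2:ℕ) < m := by omega
  have hrm : r < m := by omega
  have hr1m : r + 1 < m := by omega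
  have hr2m : r + 2 < m := by omega
  set a : Fin m := ⟨0, h0⟩ with ha
  set x2 : Fin m := ⟨1, h1m⟩ with hx2
  set x3 : Fin m := ⟨2, h2m⟩ with hx3
  set b : Fin m := ⟨r, hrm⟩ with hb
  set y2 : Fin m := ⟨r + 1, hr1m⟩ with hy2
  set y3 : Fin m := ⟨r + 2, hr2m⟩ with hy3
  set e1 : Finset (Fin m) := Finset.Iio b with he1
  set e4 : Finset (Fin m) := Finset.Ici b with he4
  set e2 : Finset (Fin m) := {a, x2} ∪ Finset.Ici y3 with he2
  set e3 : Finset (Fin m) := {b, y2} ∪ Finset.Ico x3 b with he3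
  set A : Finset (Fin m) := {a, b} with hA
  set B : Finset (Fin m) := Aᶜ with hB
  set E : Finset (Finset (Fin m)) := {e1, e2, e3, e4} with hE
  -- membership characterizations
  have me1 : ∀ v : Fin m, v ∈ e1 ↔ (v : ℕ) < r := by
    intro v; simp [he1, Finset.mem_Iio, Fin.lt_def, hb]
  have me4 : ∀ v : Fin m, v ∈ e4 ↔ r ≤ (v : ℕ) := by
    intro v; simp [he4, Finset.mem_Ici, Fin.le_def, hb]
  have me2 : ∀ v : Fin m, v ∈ e2 ↔ ((v : ℕ) = 0 ∨ (v : ℕ) = 1 ∨ r + 2 ≤ (v : ℕ)) := by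
    intro v
    simp [he2, Finset.mem_union, Finset.mem_Ici, Fin.le_def, Fin.ext_iff, ha, hx2, hy3]
  have me3 : ∀ v : Fin m, v ∈ e3 ↔
      ((v : ℕ) = r ∨ (v : ℕ) = r + 1 ∨ (2 ≤ (v : ℕ) ∧ (v : ℕ) < r)) := by
    intro v
    simp [he3, Finset.mem_union, Finset.mem_Ico, Fin.le_def, Fin.lt_def, Fin.ext_iff,
      hb, hy2, hx3]
  have mA : ∀ v : Fin m, v ∈ A ↔ ((v : ℕ) = 0 ∨ (v : ℕ) = r) := by
    intro v; simp [hA, Fin.ext_iff, ha, hb]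
  have mB : ∀ v : Fin m, v ∈ B ↔ ¬ ((v : ℕ) = 0 ∨ (v : ℕ) = r) := by
    intro v; simp [hB, mA v]
  -- pairwise distinctness of the edges we need
  have e1ne2 : e1 ≠ e2 := by
    intro h
    have h2 : x3 ∈ e1 := (me1 x3).2 (by simp [hx3]; omega)
    rw [h, me2 x3] at h2; simp [hx3] at h2; omega
  have e1ne4 : e1 ≠ e4 := by
    intro h
    have h2 : a ∈ e1 := (me1 a).2 (by simp [ha]; omega)
    rw [h, me4 a] at h2; simp [ha] at h2; omega
  have e2ne4 : e2 ≠ e4 := by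
    intro h
    have h2 : a ∈ e2 := (me2 a).2 (by simp [ha])
    rw [h, me4 a] at h2; simp [ha] at h2; omega
  have aneb : a ≠ b := by simp [ha, hb, Fin.ext_iff]; omega
  -- cardinalities
  have ce1 : e1.card = r := by rw [he1, Fin.card_Iio]
  have ce4 : e4.card = r := by rw [he4, Fin.card_Ici]; simp [hb]; omega
  have ce2 : e2.card = r := by
    rw [he2, Finset.card_union_of_disjoint, Finset.card_pair, Fin.card_Ici]
    · simp [hy3]; omega
    · simp [ha, hx2, Fin.ext_iff]
    · rw [Finset.disjoint_left]
      intro v hv hv'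
      simp [ha, hx2, Fin.ext_iff] at hv
      simp [Finset.mem_Ici, Fin.le_def, hy3] at hv'
      omega
  have ce3 : e3.card = r := by
    rw [he3, Finset.card_union_of_disjoint, Finset.card_pair, Fin.card_Ico]
    · simp [hb, hx3]; omega
    · simp [hb, hy2, Fin.ext_iff]
    · rw [Finset.disjoint_left]
      intro v hv hv'
      simp [hb, hy2, Fin.ext_iff] at hv
      simp [Finset.mem_Ico, Fin.le_def, Fin.lt_def, hx3, hb] at hv'
      omega
  -- intersections with A
  have iA1 : e1 ∩ A = {a} := by
    ext v
    simp only [Finset.mem_inter, me1 v, mA v, Finset.mem_singleton, Fin.ext_iff, ha]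
    omega
  have iA2 : e2 ∩ A = {a} := by
    ext v
    simp only [Finset.mem_inter, me2 v, mA v, Finset.mem_singleton, Fin.ext_iff, ha]
    omega
  have iA3 : e3 ∩ A = {b} := by
    ext v
    simp only [Finset.mem_inter, me3 v, mA v, Finset.mem_singleton, Fin.ext_iff, hb]
    omega
  have iA4 : e4 ∩ A = {b} := by
    ext v
    simp only [Finset.mem_inter, me4 v, mA v, Finset.mem_singleton, Fin.ext_iff, hb]
    omega
  have memE : ∀ g : Finset (Fin m), g ∈ E ↔ (g = e1 ∨ g = e2 ∨ g = e3 ∨ g = e4) := by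
    intro g; simp [hE]
  refine ⟨m, A, B, E, 2, disjoint_compl_right, Finset.union_compl A, ?_, ?_, ?_, ?_⟩
  · intro e he
    rcases (memE e).1 he with rfl | rfl | rfl | rfl
    exacts [ce1, ce2, ce3, ce4]
  · intro e he
    rcases (memE e).1 he with rfl | rfl | rfl | rfl <;>
      simp [iA1, iA2, iA3, iA4]
  · constructor
    · -- there is a matching of size 2
      refine ⟨{e1, e4}, ⟨?_, ?_⟩, ?_⟩
      · intro g hg
        simp only [Finset.mem_insert, Finset.mem_singleton] at hg
        rcases hg with rfl | rfl <;> simp [memE]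
      · intro e he f hf hne
        have hd : Disjoint e1 e4 := by
          rw [Finset.disjoint_left]
          intro v hv hv'
          rw [me1 v] at hv; rw [me4 v] at hv'; omega
        simp only [Finset.mem_insert, Finset.mem_singleton] at he hf
        rcases he with rfl | rfl <;> rcases hf with rfl | rfl
        · exact absurd rfl hne
        · exact hd
        · exact hd.symm
        · exact absurd rfl hne
      · exact Finset.card_pair e1ne4
    · -- every matching has size ≤ 2
      rintro k ⟨M, ⟨hME, hMd⟩, rfl⟩
      have hcA : A.card = 2 := Finset.card_pair aneb
      calc M.card ≤ A.card := by
            apply Finset.card_le_card_of_injOn (fun e => if a ∈ e then a else b)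
            · intro e _
              by_cases h : a ∈ e <;> simp [h, mA] <;> simp [ha, hb]
            · intro e he e' he' hv
              by_contra hne
              have hd := Finset.disjoint_left.1 (hMd e he e' he' hne)
              have key : ∀ g ∈ M, a ∈ g ∨ b ∈ g := by
                intro g hg
                rcases (memE g).1 (hME hg) with rfl | rfl | rfl | rfl
                · exact Or.inl ((me1 a).2 (by simp [ha]; omega))
                · exact Or.inl ((me2 a).2 (by simp [ha]))
                · exact Or.inr ((me3 b).2 (by simp [hb]))
                · exact Or.inr ((me4 b).2 (by simp [hb]))
              by_cases h1 : a ∈ e <;> by_cases h2 : a ∈ e' <;> simp [h1, h2] at hv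
              · exact hd h1 h2
              · exact aneb hv
              · exact aneb hv.symm
              · have hb1 := (key e he).resolve_left h1
                have hb2 := (key e' he').resolve_left h2
                exact hd hb1 hb2
        _ = 2 := hcA
  · -- the two disconnected matchings
    have h21 : (2 : ℕ) - 1 = 1 := rfl
    refine ⟨{e1}, {e2}, ⟨?_, ?_⟩, by simp [h21], ⟨?_, ?_⟩, by simp [h21], ?_⟩
    · intro g hg; simp only [Finset.mem_singleton] at hg; subst hg; simp [memE]
    · intro e he f hf hne
      simp only [Finset.mem_singleton] at he hf; subst he; subst hf
      exact absurd rfl hne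
    · intro g hg; simp only [Finset.mem_singleton] at hg; subst hg; simp [memE]
    · intro e he f hf hne
      simp only [Finset.mem_singleton] at he hf; subst he; subst hf
      exact absurd rfl hne
    · rw [h21]
      intro hreach
      have inv : ∀ N : Finset (Finset (Fin m)),
          Relation.ReflTransGen (BipMatAdj E B 1) {e1} N → (N = {e1} ∨ N = {e4}) := by
        intro N h
        induction h with
        | refl => exact Or.inl rfl
        | tail hstep hadj ih =>
          rename_i N' N''
          obtain ⟨_, hM2, _, hc2, e, f, hdiffe, hdifff, hdisj⟩ := hadj
          obtain ⟨g, rfl⟩ := Finset.card_eq_one.mp hc2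
          have hgE : g ∈ E := hM2.1 (Finset.mem_singleton_self g)
          have hfmem : f ∈ {g} \ N' := by rw [hdifff]; exact Finset.mem_singleton_self f
          rw [Finset.mem_sdiff, Finset.mem_singleton] at hfmem
          obtain ⟨rfl, hgnot⟩ := hfmem
          have hemem : e ∈ N' \ {f} := by rw [hdiffe]; exact Finset.mem_singleton_self e
          rw [Finset.mem_sdiff] at hemem
          rcases ih with rfl | rfl
          · -- N' = {e1}
            have he' : e = e1 := Finset.mem_singleton.1 hemem.1
            subst he'
            have hgne1 : f ≠ e1 := by
              intro h; exact hgnot (h ▸ Finset.mem_singleton_self e1)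
            rcases (memE f).1 hgE with rfl | rfl | rfl | rfl
            · exact absurd rfl hgne1
            · exfalso
              have hx : x2 ∈ e1 ∩ B := by
                rw [Finset.mem_inter, me1 x2, mB x2]; simp [hx2]; omega
              have hx' : x2 ∈ e2 ∩ B := by
                rw [Finset.mem_inter, me2 x2, mB x2]; simp [hx2]; omega
              exact Finset.disjoint_left.1 hdisj hx hx'
            · exfalso
              have hx : x3 ∈ e1 ∩ B := by
                rw [Finset.mem_inter, me1 x3, mB x3]; simp [hx3]; omega
              have hx' : x3 ∈ e3 ∩ B := by
                rw [Finset.mem_inter, me3 x3, mB x3]; simp [hx3]; omega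
              exact Finset.disjoint_left.1 hdisj hx hx'
            · exact Or.inr rfl
          · -- N' = {e4}
            have he' : e = e4 := Finset.mem_singleton.1 hemem.1
            subst he'
            have hgne4 : f ≠ e4 := by
              intro h; exact hgnot (h ▸ Finset.mem_singleton_self e4)
            rcases (memE f).1 hgE with rfl | rfl | rfl | rfl
            · exact Or.inl rfl
            · exfalso
              have hx : y3 ∈ e4 ∩ B := by
                rw [Finset.mem_inter, me4 y3, mB y3]; simp [hy3]
              have hx' : y3 ∈ e2 ∩ B := by
                rw [Finset.mem_inter, me2 y3, mB y3]; simp [hy3]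
              exact Finset.disjoint_left.1 hdisj hx hx'
            · exfalso
              have hx : y2 ∈ e4 ∩ B := by
                rw [Finset.mem_inter, me4 y2, mB y2]; simp [hy2]
              have hx' : y2 ∈ e3 ∩ B := by
                rw [Finset.mem_inter, me3 y2, mB y2]; simp [hy2]
              exact Finset.disjoint_left.1 hdisj hx hx'
            · exact absurd rfl hgne4
      rcases inv {e2} hreach with h | h
      · exact e1ne2 (Finset.singleton_injective h).symm
      · exact e2ne4 (Finset.singleton_injective h)
end
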